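/- arXiv:math/0206152 — 2 statements merged into one kernel-verified Lean document; each statement's English description precedes it below -/
import Mathlib

section
/- (Huang's lemma, bilinear form version used in Lemma 4.1(i)) Let n and k be positive integers with k < n. Suppose Π: C^n × C^n → C^k is a symmetric C-bilinear map, ⟨·,·⟩ is a positive definite Hermitian inner product on C^k, (·,·) is a positive definite Hermitian inner product on C^n, and H is a Hermitian sesquilinear form on C^n such that ⟨Π(X,X), Π(X,X)⟩ = (X,X)·H(X,X) for all X ∈ C^n. Then Π ≡ 0. -/
private lemma sesq_expand {M : Type*} [AddCommGroup M] [Module ℂ M]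
    (s : M → M → ℂ)
    (hadd : ∀ u u' v, s (u + u') v = s u v + s u' v)
    (hsmul : ∀ (c : ℂ) u v, s (c • u) v = c * s u v)
    (hconj : ∀ u v, s v u = starRingEnd ℂ (s u v))
    (x y : M) (c : ℂ) :
    s (x + c • y) (x + c • y)
      = s x x + c * s y x + starRingEnd ℂ c * s x y
        + (c * starRingEnd ℂ c) * s y y := by
  have hadd' : ∀ u v v', s u (v + v') = s u v + s u v' := by
    intro u v v'
    rw [hconj, hadd, map_add, ← hconj, ← hconj]
  have hsmul' : ∀ (c : ℂ) u v, s u (c • v) = starRingEnd ℂ c * s u v := by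
    intro c u v
    rw [hconj, hsmul, map_mul, ← hconj]
  rw [hadd, hsmul, hadd', hadd', hsmul', hsmul']
  ring

private lemma sesq_expand2 {M : Type*} [AddCommGroup M] [Module ℂ M]
    (s : M → M → ℂ)
    (hadd : ∀ u u' v, s (u + u') v = s u v + s u' v)
    (hsmul : ∀ (c : ℂ) u v, s (c • u) v = c * s u v)
    (hconj : ∀ u v, s v u = starRingEnd ℂ (s u v))
    (x y : M) (c d : ℂ) :
    s (c • x + d • y) (c • x + d • y)
      = (c * starRingEnd ℂ c) * s x x + (c * starRingEnd ℂ d) * s x y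
        + (d * starRingEnd ℂ c) * s y x + (d * starRingEnd ℂ d) * s y y := by
  have hadd' : ∀ u v v', s u (v + v') = s u v + s u v' := by
    intro u v v'
    rw [hconj, hadd, map_add, ← hconj, ← hconj]
  have hsmul' : ∀ (c : ℂ) u v, s u (c • v) = starRingEnd ℂ c * s u v := by
    intro c u v
    rw [hconj, hsmul, map_mul, ← hconj]
  rw [hadd, hsmul, hsmul, hadd', hadd', hsmul', hsmul', hsmul', hsmul']
  ring

private lemma huang_coeffs (c10 c01 c20 c11 c02 c21 c12 c22 : ℂ)
    (h : ∀ t : ℂ, c10 * t + c01 * (starRingEnd ℂ t) + c20 * t ^ 2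
      + c11 * (t * starRingEnd ℂ t) + c02 * (starRingEnd ℂ t) ^ 2
      + c21 * (t ^ 2 * starRingEnd ℂ t) + c12 * (t * (starRingEnd ℂ t) ^ 2)
      + c22 * (t ^ 2 * (starRingEnd ℂ t) ^ 2) = 0) :
    c10 = 0 ∧ c11 = 0 ∧ c21 = 0 ∧ c22 = 0 := by
  have hI := Complex.I_sq
  have E1 := h 1
  have E2 := h (-1)
  have E3 := h 2
  have E4 := h (-2)
  have E5 := h Complex.I
  have E6 := h (-Complex.I)
  have E7 := h (2 * Complex.I)
  simp only [map_one, map_neg, map_ofNat, map_mul, Complex.conj_I] at E1 E2 E3 E4 E5 E6 E7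
  refine ⟨?_, ?_, ?_, ?_⟩
  · linear_combination (1/3 + Complex.I/6) * E1 + (-1/3 + Complex.I/6) * E2
      + (-1/24 - Complex.I/24) * E3 + (1/24 - Complex.I/24) * E4
      + (-Complex.I/2) * E5 + (Complex.I/6) * E6 + (Complex.I/12) * E7
      + ((1/2 : ℂ) * c10 - (1/2 : ℂ) * c01 + (Complex.I - Complex.I^3) * c22) * hI
  · linear_combination (5/12 : ℂ) * E1 + (5/12 : ℂ) * E2 + (-1/24 : ℂ) * E3
      + (-1/24 : ℂ) * E4 + (1/4 : ℂ) * E5 + (1/4 : ℂ) * E6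
      + ((-1/2 : ℂ) * c20 + (1/2 : ℂ) * c11 + (-1/2 : ℂ) * c02
        + (1/2 - Complex.I^2/2) * c22) * hI
  · linear_combination (-1/12 - Complex.I/6) * E1 + (1/12 - Complex.I/6) * E2
      + (1/24 + Complex.I/24) * E3 + (-1/24 + Complex.I/24) * E4
      + (Complex.I/4) * E5 + (Complex.I/12) * E6 + (-Complex.I/12) * E7
      + ((1/2 - Complex.I^2/2) * c21 + (-1/2 + Complex.I^2/2) * c12
        + (-Complex.I + Complex.I^3) * c22) * hI
  · linear_combination (-1/6 : ℂ) * E1 + (-1/6 : ℂ) * E2 + (1/24 : ℂ) * E3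
      + (1/24 : ℂ) * E4

/-- Huang's lemma, bilinear form version: if a symmetric ℂ-bilinear map
    Π : ℂⁿ × ℂⁿ → ℂᵏ with k < n satisfies ⟨Π(X,X),Π(X,X)⟩ = (X,X)·H(X,X)
    for a Hermitian form H, then Π ≡ 0. -/
theorem stmt_2 (n k : ℕ) (hn : 0 < n) (hk : 0 < k) (hkn : k < n)
    (P : (Fin n → ℂ) → (Fin n → ℂ) → (Fin k → ℂ))
    (Psymm : ∀ X Y, P X Y = P Y X)
    (Padd : ∀ X X' Y, P (X + X') Y = P X Y + P X' Y)
    (Psmul : ∀ (c : ℂ) X Y, P (c • X) Y = c • P X Y)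
    (ipk : (Fin k → ℂ) → (Fin k → ℂ) → ℂ)
    (ipk_add : ∀ u u' v, ipk (u + u') v = ipk u v + ipk u' v)
    (ipk_smul : ∀ (c : ℂ) u v, ipk (c • u) v = c * ipk u v)
    (ipk_conj : ∀ u v, ipk v u = starRingEnd ℂ (ipk u v))
    (ipk_pos : ∀ u, u ≠ 0 → 0 < (ipk u u).re)
    (ipn : (Fin n → ℂ) → (Fin n → ℂ) → ℂ)
    (ipn_add : ∀ u u' v, ipn (u + u') v = ipn u v + ipn u' v)
    (ipn_smul : ∀ (c : ℂ) u v, ipn (c • u) v = c * ipn u v)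
    (ipn_conj : ∀ u v, ipn v u = starRingEnd ℂ (ipn u v))
    (ipn_pos : ∀ u, u ≠ 0 → 0 < (ipn u u).re)
    (H : (Fin n → ℂ) → (Fin n → ℂ) → ℂ)
    (H_add : ∀ u u' v, H (u + u') v = H u v + H u' v)
    (H_smul : ∀ (c : ℂ) u v, H (c • u) v = c * H u v)
    (H_conj : ∀ u v, H v u = starRingEnd ℂ (H u v))
    (heq : ∀ X, ipk (P X X) (P X X) = ipn X X * H X X) :
    ∀ X Y, P X Y = 0 := by
  have Padd' : ∀ X Y Y', P X (Y + Y') = P X Y + P X Y' := by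
    intro X Y Y'
    rw [Psymm, Padd, Psymm Y X, Psymm Y' X]
  have Psmul' : ∀ (c : ℂ) X Y, P X (c • Y) = c • P X Y := by
    intro c X Y
    rw [Psymm, Psmul, Psymm]
  have hdiag : ∀ w, P w w = 0 := by
    intro w
    by_contra ha
    have hw : w ≠ 0 := by
      rintro rfl
      apply ha
      have := Psmul 0 0 0
      simpa using this
    -- find a nonzero kernel vector
    obtain ⟨u, hu0, hu⟩ : ∃ u : Fin n → ℂ, u ≠ 0 ∧ P u w = 0 := by
      let L : (Fin n → ℂ) →ₗ[ℂ] (Fin k → ℂ) :=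
        { toFun := fun z => P z w
          map_add' := fun x y => Padd x y w
          map_smul' := fun c x => Psmul c x w }
      have hninj : ¬ Function.Injective L := by
        intro hinj
        have h1 := LinearMap.finrank_le_finrank_of_injective hinj
        rw [Module.finrank_fintype_fun_eq_card, Module.finrank_fintype_fun_eq_card,
          Fintype.card_fin, Fintype.card_fin] at h1
        omega
      rw [Function.not_injective_iff] at hninj
      obtain ⟨x, y, hxy, hne⟩ := hninj
      refine ⟨x - y, sub_ne_zero.mpr hne, ?_⟩
      have hz : L (x - y) = 0 := by rw [map_sub, hxy, sub_self]
      simpa [L] using hz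
    have hPwu : P w u = 0 := by rw [Psymm]; exact hu
    have key : ∀ t : ℂ,
        (ipn w w * H u w + ipn u w * H w w) * t
        + (ipn w w * H w u + ipn w u * H w w) * (starRingEnd ℂ t)
        + (ipn u w * H u w - ipk (P u u) (P w w)) * t ^ 2
        + (ipn w w * H u u + ipn u u * H w w + ipn u w * H w u + ipn w u * H u w)
            * (t * starRingEnd ℂ t)
        + (ipn w u * H w u - ipk (P w w) (P u u)) * (starRingEnd ℂ t) ^ 2
        + (ipn u w * H u u + ipn u u * H u w) * (t ^ 2 * starRingEnd ℂ t)
        + (ipn w u * H u u + ipn u u * H w u) * (t * (starRingEnd ℂ t) ^ 2)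
        + (ipn u u * H u u - ipk (P u u) (P u u)) * (t ^ 2 * (starRingEnd ℂ t) ^ 2)
        = 0 := by
      intro t
      have e1 : P (w + t • u) (w + t • u) = P w w + (t * t) • P u u := by
        rw [Padd, Psmul, Padd', Padd', Psmul', Psmul', hPwu, hu, smul_zero, add_zero,
          zero_add, smul_smul]
      have e2 := sesq_expand ipk ipk_add ipk_smul ipk_conj (P w w) (P u u) (t * t)
      have e3 := sesq_expand ipn ipn_add ipn_smul ipn_conj w u t
      have e4 := sesq_expand H H_add H_smul H_conj w u t
      have h1 := heq (w + t • u)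
      rw [e1, e2, e3, e4] at h1
      simp only [map_mul] at h1
      linear_combination heq w - h1
    obtain ⟨h10, h11, h21, h22⟩ := huang_coeffs _ _ _ _ _ _ _ _ key
    -- realness
    obtain ⟨α, hα⟩ : ∃ r : ℝ, ipn w w = (r : ℂ) :=
      ⟨_, (Complex.conj_eq_iff_re.mp (ipn_conj w w).symm).symm⟩
    obtain ⟨δ, hδ⟩ : ∃ r : ℝ, ipn u u = (r : ℂ) :=
      ⟨_, (Complex.conj_eq_iff_re.mp (ipn_conj u u).symm).symm⟩
    obtain ⟨α', hα'⟩ : ∃ r : ℝ, H w w = (r : ℂ) :=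
      ⟨_, (Complex.conj_eq_iff_re.mp (H_conj w w).symm).symm⟩
    obtain ⟨δ', hδ'⟩ : ∃ r : ℝ, H u u = (r : ℂ) :=
      ⟨_, (Complex.conj_eq_iff_re.mp (H_conj u u).symm).symm⟩
    obtain ⟨κb, hκb⟩ : ∃ r : ℝ, ipk (P u u) (P u u) = (r : ℂ) :=
      ⟨_, (Complex.conj_eq_iff_re.mp (ipk_conj (P u u) (P u u)).symm).symm⟩
    have hα0 : 0 < α := by
      have := ipn_pos w hw; rw [hα] at this; simpa using this
    have hδ0 : 0 < δ := by
      have := ipn_pos u hu0; rw [hδ] at this; simpa using this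
    have hκb0 : 0 ≤ κb := by
      rcases eq_or_ne (P u u) 0 with hb | hb
      · have hz : ipk (0 : Fin k → ℂ) (0 : Fin k → ℂ) = 0 := by
          have := ipk_smul 0 0 0; simpa using this
        rw [hb, hz] at hκb
        have : κb = 0 := by exact_mod_cast hκb.symm
        simp [this]
      · have := ipk_pos _ hb; rw [hκb] at this
        exact le_of_lt (by simpa using this)
    have hκa0 : 0 < α * α' := by
      have h00 : ipk (P w w) (P w w) = ((α * α' : ℝ) : ℂ) := by
        rw [heq w, hα, hα']; push_cast; ring
      have := ipk_pos _ ha; rw [h00] at this; simpa using this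
    -- rewrite the coefficient equations
    rw [hα, hα'] at h10
    rw [ipn_conj u w, H_conj u w, hα, hδ, hα', hδ'] at h11
    rw [hδ, hδ'] at h21
    rw [hδ, hδ', hκb] at h22
    rcases eq_or_ne (ipn u w) 0 with hB | hB
    · -- B = 0 case
      rw [hB] at h11
      simp only [map_zero, zero_mul, add_zero] at h11
      have hr11 : α * δ' + δ * α' = 0 := by exact_mod_cast h11
      have hr22 : δ * δ' - κb = 0 := by exact_mod_cast h22
      have hlin : α * κb + δ ^ 2 * α' = 0 := by linear_combination δ * hr11 - α * hr22
      have hα'le : α' ≤ 0 := by nlinarith [hlin, mul_nonneg hα0.le hκb0, mul_pos hδ0 hδ0]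
      nlinarith [hκa0, mul_nonneg hα0.le (neg_nonneg.mpr hα'le)]
    · -- B ≠ 0 case
      have hα'0 : 0 < α' := by nlinarith
      have hα'ne : ((α' : ℂ)) ≠ 0 := by
        exact_mod_cast Complex.ofReal_ne_zero.mpr (ne_of_gt hα'0)
      have h10c : (α : ℂ) * (starRingEnd ℂ (H u w))
          + (starRingEnd ℂ (ipn u w)) * (α' : ℂ) = 0 := by
        have := congrArg (starRingEnd ℂ) h10
        simpa [map_add, map_mul, Complex.conj_ofReal] using this
      have E2' : (α : ℂ) * (δ' : ℂ) - (δ : ℂ) * (α' : ℂ) = 0 := by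
        have hz : ipn u w * ((α : ℂ) * (δ' : ℂ) - (δ : ℂ) * (α' : ℂ)) = 0 := by
          linear_combination (α : ℂ) * h21 - (δ : ℂ) * h10
        exact (mul_eq_zero.mp hz).resolve_left hB
      have hBB : ipn u w * starRingEnd ℂ (ipn u w) = (α : ℂ) * (δ : ℂ) := by
        have hz : (α' : ℂ) * ((α : ℂ) * (δ : ℂ)
            - ipn u w * starRingEnd ℂ (ipn u w)) * 2 = 0 := by
          linear_combination (α : ℂ) * h11 - (ipn u w) * h10c
            - (starRingEnd ℂ (ipn u w)) * h10 - (α : ℂ) * E2'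
        rcases mul_eq_zero.mp hz with h' | h'
        · rcases mul_eq_zero.mp h' with h'' | h''
          · exact absurd h'' hα'ne
          · linear_combination -h''
        · norm_num at h'
      -- Cauchy–Schwarz equality forces u ∥ w
      have e := sesq_expand2 ipn ipn_add ipn_smul ipn_conj u w (α : ℂ) (-(ipn u w))
      simp only [map_neg, Complex.conj_ofReal] at e
      have hx : ipn ((α : ℂ) • u + (-(ipn u w)) • w)
          ((α : ℂ) • u + (-(ipn u w)) • w) = 0 := by
        rw [e, hα, hδ, ipn_conj u w]
        linear_combination (-(α : ℂ)) * hBB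
      have hxz : (α : ℂ) • u + (-(ipn u w)) • w = 0 := by
        by_contra hne
        have := ipn_pos _ hne
        rw [hx] at this
        simp at this
      have huw : (α : ℂ) • u = (ipn u w) • w := by
        rw [neg_smul, ← sub_eq_add_neg] at hxz
        exact sub_eq_zero.mp hxz
      have hz : (ipn u w) • P w w = 0 := by
        calc (ipn u w) • P w w = P ((ipn u w) • w) w := (Psmul _ _ _).symm
          _ = P ((α : ℂ) • u) w := by rw [huw]
          _ = (α : ℂ) • P u w := Psmul _ _ _
          _ = 0 := by rw [hu, smul_zero]
      rcases smul_eq_zero.mp hz with h' | h'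
      · exact hB h'
      · exact ha h'
  intro X Y
  have e := hdiag (X + Y)
  rw [Padd, Padd', Padd', hdiag X, hdiag Y, Psymm Y X] at e
  have h2 : (2 : ℂ) • P X Y = 0 := by
    rw [two_smul]
    simpa using e
  rcases smul_eq_zero.mp h2 with h' | h'
  · norm_num at h'
  · exact h'
end

section
/- (Lemma 4.1(ii), full statement) Let n, m be positive integers with m < n/2. Let Π, Π̃: C^n × C^n → C^m be symmetric C-bilinear maps, ⟨·,·⟩ a positive definite Hermitian inner product on C^m, and (·,·) the standard Hermitian inner product on C^n. Suppose the traceless components of the quartic forms X ↦ ⟨Π(X,X),Π(X,X)⟩ and X ↦ ⟨Π̃(X,X),Π̃(X,X)⟩ coincide; equivalently, suppose there is a Hermitian form H on C^n with ⟨Π(X,X),Π(X,X)⟩ − ⟨Π̃(X,X),Π̃(X,X)⟩ = (X,X)·H(X,X) for all X. Then H ≡ 0 and there exists a unitary U of C^m with Π̃ = U ∘ Π. -/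
/-!
Polarizing the hypothesis, an identity of bidegree `(2, 2)` in `X` and `X̄`, gives
`⟨Π(X,X), Π(Y,Y)⟩ - ⟨Π̃(X,X), Π̃(Y,Y)⟩ = (X,Y) H(X,Y)` for all `X, Y`. For fixed `Y` the left side is
a linear combination of the `2m` quadratic forms `X ↦ Π(X,X)_a, Π̃(X,X)_a`, so all the forms
`X ↦ (X,Y) H(X,Y)` lie in a space of dimension `≤ 2m < n`. These forms are `φ · Bφ`, where `φ`
runs over the dual of `ℂⁿ` and `B` is an endomorphism of the dual that vanishes iff `H` does. If
`B ≠ 0`, some `φ₀` makes `ψ ↦ ψ · Bφ₀ + φ₀ · Bψ` injective (take `φ₀` not an eigenvector of `B`,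
or any `φ₀ ≠ 0` if `B` is a homothety), which puts `n` independent forms in that space; so `H = 0`
(Huang's lemma). Then the families `Π(X,X)` and `Π̃(X,X)` have the same Gram matrix, so a unitary
`U` maps one to the other, and `Π̃ = U ∘ Π` because a symmetric bilinear map is determined by its
values on the diagonal.
-/

open Module LinearMap ComplexConjugate

def sesqFormOfConjSymm {R V : Type*} [CommSemiring R] [StarRing R] [AddCommMonoid V]
    [Module R V] (B : V → V → R) (add_left : ∀ u u' v, B (u + u') v = B u v + B u' v)
    (smul_left : ∀ (c : R) u v, B (c • u) v = c * B u v)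
    (conj_symm : ∀ u v, B v u = conj (B u v)) : V →ₗ[R] V →ₗ⋆[R] R :=
  mk₂'ₛₗ _ _ B add_left smul_left
    (fun u v v' => by rw [conj_symm, add_left, map_add, ← conj_symm, ← conj_symm])
    (fun c u v => by rw [conj_symm, smul_left, map_mul, ← conj_symm]; rfl)

def bilinOfSymm {R E F : Type*} [CommSemiring R] [AddCommMonoid E] [Module R E] [AddCommMonoid F]
    [Module R F] (P : E → E → F) (symm : ∀ X Y, P X Y = P Y X)
    (add_left : ∀ X X' Y, P (X + X') Y = P X Y + P X' Y)
    (smul_left : ∀ (c : R) X Y, P (c • X) Y = c • P X Y) : E →ₗ[R] E →ₗ[R] F :=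
  mk₂ R P add_left smul_left (fun X Y Y' => by rw [symm, add_left, symm Y, symm Y'])
    (fun c X Y => by rw [symm, smul_left, symm Y])

def stdHermitian (n : ℕ) : (Fin n → ℂ) →ₗ[ℂ] (Fin n → ℂ) →ₗ⋆[ℂ] ℂ :=
  sesqFormOfConjSymm (fun X Y => ∑ i, X i * conj (Y i))
    (fun X X' Y => by simp only [Pi.add_apply, add_mul, Finset.sum_add_distrib])
    (fun c X Y => by simp only [Pi.smul_apply, smul_eq_mul, Finset.mul_sum, mul_assoc])
    (fun X Y => by simp only [map_sum, map_mul, Complex.conj_conj, mul_comm])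

section Polarization

variable {V : Type*} [AddCommGroup V] [Module ℂ V]

theorem sesq_eq_zero_of_diag (s : V → V → ℂ)
    (add_left : ∀ X X' Y, s (X + X') Y = s X Y + s X' Y)
    (smul_left : ∀ (c : ℂ) X Y, s (c • X) Y = c * s X Y)
    (add_right : ∀ X Y Y', s X (Y + Y') = s X Y + s X Y')
    (smul_right : ∀ (c : ℂ) X Y, s X (c • Y) = conj c * s X Y)
    (h : ∀ X, s X X = 0) (X Y : V) : s X Y = 0 := by
  have h1 := h (X + Y)
  have hI := h (X + Complex.I • Y)
  simp only [add_left, add_right, smul_left, smul_right, Complex.conj_I, h] at h1 hI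
  linear_combination (1/2 : ℂ) * h1 + (Complex.I / 2) * hI + (s X Y - s Y X) / 2 * Complex.I_sq

theorem quartic_eq_zero_of_diag (S : V → V → V → V → ℂ)
    (add_left : ∀ X X' Y Z W, S (X + X') Y Z W = S X Y Z W + S X' Y Z W)
    (smul_left : ∀ (c : ℂ) X Y Z W, S (c • X) Y Z W = c * S X Y Z W)
    (add_third : ∀ X Y Z Z' W, S X Y (Z + Z') W = S X Y Z W + S X Y Z' W)
    (smul_third : ∀ (c : ℂ) X Y Z W, S X Y (c • Z) W = conj c * S X Y Z W)
    (symm_left : ∀ X Y Z W, S X Y Z W = S Y X Z W)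
    (symm_right : ∀ X Y Z W, S X Y Z W = S X Y W Z)
    (h : ∀ X, S X X X X = 0) (X Y Z W : V) : S X Y Z W = 0 := by
  have add_second : ∀ X Y Y' Z W, S X (Y + Y') Z W = S X Y Z W + S X Y' Z W := fun X Y Y' Z W => by
    rw [symm_left, add_left, symm_left Y, symm_left Y']
  have smul_second : ∀ (c : ℂ) X Y Z W, S X (c • Y) Z W = c * S X Y Z W := fun c X Y Z W => by
    rw [symm_left, smul_left, symm_left Y]
  have add_fourth : ∀ X Y Z W W', S X Y Z (W + W') = S X Y Z W + S X Y Z W' := fun X Y Z W W' => by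
    rw [symm_right, add_third, symm_right _ _ W, symm_right _ _ W']
  have smul_fourth : ∀ (c : ℂ) X Y Z W, S X Y Z (c • W) = conj c * S X Y Z W := fun c X Y Z W => by
    rw [symm_right, smul_third, symm_right _ _ W]
  -- Summing `S (X + tY) …` over `t ∈ {±1, ±i}` keeps only the terms with as many `Y`s among the
  -- linear slots as among the conjugate-linear ones.
  have mixed : ∀ X Y, S X Y X Y = 0 := fun X Y => by
    have h₁ := h (X + Y)
    have h₂ := h (X + (-1 : ℂ) • Y)
    have h₃ := h (X + Complex.I • Y)
    have h₄ := h (X + (-Complex.I) • Y)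
    simp only [add_left, add_second, add_third, add_fourth, smul_left, smul_second, smul_third,
      smul_fourth, map_neg, map_one, Complex.conj_I, h] at h₁ h₂ h₃ h₄
    have e₁ : S Y X Y X = S X Y X Y := by rw [symm_left, symm_right]
    have e₂ : S Y X X Y = S X Y X Y := by rw [symm_left]
    have e₃ : S X Y Y X = S X Y X Y := by rw [symm_right]
    linear_combination (h₁ + h₂ + h₃ + h₄) / 16 - (e₁ + e₂ + e₃) / 4
      + (S X Y X Y + S Y X Y X + S Y X X Y + S X Y Y X - S X X Y Y - S Y Y X X) / 8
        * Complex.I_sq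
  have mixed' : ∀ X Y Z, S X Y Z Y = 0 := fun X Y Z =>
    sesq_eq_zero_of_diag (fun A B => S A Y B Y) (fun A A' B => add_left A A' Y B Y)
      (fun c A B => smul_left c A Y B Y) (fun A B B' => add_third A Y B B' Y)
      (fun c A B => smul_third c A Y B Y) (fun A => mixed A Y) X Z
  exact sesq_eq_zero_of_diag (fun B D => S X B Z D) (fun B B' D => add_second X B B' Z D)
    (fun c B D => smul_second c X B Z D) (fun B D D' => add_fourth X B Z D D')
    (fun c B D => smul_fourth c X B Z D) (fun B => mixed' X B Z) Y W

theorem quartic_identity_of_diag {E F : Type*} [AddCommGroup E] [Module ℂ E] [AddCommGroup F]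
    [Module ℂ F] (B : F →ₗ[ℂ] F →ₗ⋆[ℂ] ℂ) {P Pt : E →ₗ[ℂ] E →ₗ[ℂ] F}
    (hP : ∀ X Y, P X Y = P Y X) (hPt : ∀ X Y, Pt X Y = Pt Y X) (g H : E →ₗ[ℂ] E →ₗ⋆[ℂ] ℂ)
    (h : ∀ X, B (P X X) (P X X) - B (Pt X X) (Pt X X) = g X X * H X X) (X Y : E) :
    B (P X X) (P Y Y) - B (Pt X X) (Pt Y Y) = g X Y * H X Y := by
  have := quartic_eq_zero_of_diag
    (fun X Y Z W => B (P X Y) (P Z W) - B (Pt X Y) (Pt Z W)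
      - (g X Z * H Y W + g X W * H Y Z + g Y Z * H X W + g Y W * H X Z) / 4)
    (fun _ _ _ _ _ => by simp only [map_add, LinearMap.add_apply]; ring)
    (fun _ _ _ _ _ => by simp only [map_smul, LinearMap.smul_apply, smul_eq_mul]; ring)
    (fun _ _ _ _ _ => by simp only [map_add, LinearMap.add_apply]; ring)
    (fun _ _ _ _ _ => by simp only [map_smul, map_smulₛₗ, LinearMap.smul_apply, smul_eq_mul]; ring)
    (fun X Y _ _ => by rw [hP X Y, hPt X Y]; ring)
    (fun _ _ Z W => by rw [hP Z W, hPt Z W]; ring)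
    (fun X => by linear_combination h X) X X Y Y
  linear_combination this

end Polarization

namespace Module.Dual

variable {K E : Type*} [Field K] [AddCommGroup E] [Module K E]

theorem eq_zero_of_mul_eq_zero {α δ : Dual K E} (hα : α ≠ 0) (h : ⇑α * ⇑δ = 0) : δ = 0 := by
  obtain ⟨X₀, hX₀⟩ : ∃ X₀, α X₀ ≠ 0 := by
    by_contra! h'
    exact hα (LinearMap.ext h')
  have hδ : ∀ X, α X ≠ 0 → δ X = 0 := fun X hX =>
    (mul_eq_zero.mp (congrFun h X)).resolve_left hX
  ext X
  by_cases hX : α X = 0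
  · have := hδ (X + X₀) (by simpa [hX] using hX₀)
    rw [map_add, hδ X₀ hX₀, add_zero] at this
    exact this
  · exact hδ X hX

theorem exists_eq_smul_of_ker_le {α ψ : Dual K E} (h : ker α ≤ ker ψ) : ∃ c : K, ψ = c • α := by
  have := mem_span_of_iInf_ker_le_ker (L := fun _ : Unit => α) (by simpa using h)
  rw [Set.range_const, Submodule.mem_span_singleton] at this
  obtain ⟨c, hc⟩ := this
  exact ⟨c, hc.symm⟩

theorem exists_eq_smul_of_mul_add_mul_eq_zero {α β ψ γ : Dual K E}
    (hαβ : LinearIndependent K ![α, β]) (h : ⇑ψ * ⇑β + ⇑α * ⇑γ = 0) :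
    ∃ c : K, ψ = c • α ∧ γ = -(c • β) := by
  have hα : α ≠ 0 := hαβ.ne_zero 0
  -- On `ker α` the hypothesis reads `ψ β = 0`, and `β` does not vanish identically there.
  have hker : ¬ ker α ≤ ker β := fun hle => by
    obtain ⟨c, hc⟩ := exists_eq_smul_of_ker_le hle
    have := LinearIndependent.pair_iff.mp hαβ c (-1) (by rw [hc]; module)
    exact one_ne_zero (neg_eq_zero.mp this.2)
  have hβK : β ∘ₗ (ker α).subtype ≠ 0 := fun h0 => hker fun X hX =>
    LinearMap.congr_fun h0 ⟨X, hX⟩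
  have hψK : ψ ∘ₗ (ker α).subtype = 0 := by
    refine eq_zero_of_mul_eq_zero hβK (funext fun X => ?_)
    have := congrFun h X
    simp only [Pi.add_apply, Pi.mul_apply, Pi.zero_apply, LinearMap.mem_ker.mp X.2, zero_mul,
      add_zero] at this
    simpa [mul_comm] using this
  obtain ⟨c, rfl⟩ := exists_eq_smul_of_ker_le fun X hX => LinearMap.congr_fun hψK ⟨X, hX⟩
  refine ⟨c, rfl, ?_⟩
  have : γ + c • β = 0 := eq_zero_of_mul_eq_zero hα (funext fun X => by
    have := congrFun h X
    simp only [Pi.add_apply, Pi.mul_apply, Pi.zero_apply, LinearMap.smul_apply, smul_eq_mul] at this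
    simp only [Pi.mul_apply, LinearMap.add_apply, LinearMap.smul_apply, smul_eq_mul, Pi.zero_apply]
    linear_combination this)
  exact eq_neg_of_add_eq_zero_left this

theorem exists_forall_mul_add_mul_eq_zero_imp [NeZero (2 : K)] {B : End K (Dual K E)}
    (hB : B ≠ 0) : ∃ φ₀ : Dual K E, ∀ ψ : Dual K E, ⇑ψ * ⇑(B φ₀) + ⇑φ₀ * ⇑(B ψ) = 0 → ψ = 0 := by
  by_cases hind : ∃ φ, LinearIndependent K ![φ, B φ]
  · obtain ⟨φ₀, hφ₀⟩ := hind
    refine ⟨φ₀, fun ψ hψ => ?_⟩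
    obtain ⟨c, rfl, hc⟩ := exists_eq_smul_of_mul_add_mul_eq_zero hφ₀ hψ
    have hBφ₀ : B φ₀ ≠ 0 := hφ₀.ne_zero 1
    rw [map_smul] at hc
    have h2c : (2 : K) • c • B φ₀ = 0 := by
      rw [two_smul]
      nth_rewrite 1 [hc]
      exact neg_add_cancel _
    rcases smul_eq_zero.mp ((smul_eq_zero.mp h2c).resolve_left two_ne_zero) with h | h
    · rw [h, zero_smul]
    · exact absurd h hBφ₀
  · simp only [not_exists] at hind
    obtain ⟨a, rfl⟩ := exists_eq_smul_id_of_forall_notLinearIndependent hind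
    obtain ⟨φ₀, hφ₀⟩ : ∃ φ₀, (a • 1 : End K (Dual K E)) φ₀ ≠ 0 := by
      by_contra! h
      exact hB (LinearMap.ext h)
    have ha : a ≠ 0 := by rintro rfl; simp at hφ₀
    refine ⟨φ₀, fun ψ hψ => ?_⟩
    refine eq_zero_of_mul_eq_zero (α := φ₀) (by rintro rfl; simp at hφ₀) (funext fun X => ?_)
    have := congrFun hψ X
    simp only [Pi.add_apply, Pi.mul_apply, LinearMap.smul_apply, Module.End.one_apply,
      smul_eq_mul, Pi.zero_apply] at this ⊢
    have h2a : (2 * a) * (φ₀ X * ψ X) = 0 := by linear_combination this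
    exact (mul_eq_zero.mp h2a).resolve_left (mul_ne_zero two_ne_zero ha)

theorem finrank_le_of_mul_apply_mem [NeZero (2 : K)] [FiniteDimensional K E]
    {B : End K (Dual K E)} (hB : B ≠ 0) {W : Submodule K (E → K)} [FiniteDimensional K W]
    (hW : ∀ φ : Dual K E, ⇑φ * ⇑(B φ) ∈ W) : finrank K E ≤ finrank K W := by
  have hpolar : ∀ φ ψ : Dual K E, ⇑ψ * ⇑(B φ) + ⇑φ * ⇑(B ψ) ∈ W := fun φ ψ => by
    have := W.sub_mem (W.sub_mem (hW (φ + ψ)) (hW φ)) (hW ψ)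
    convert this using 1
    ext X
    simp only [Pi.add_apply, Pi.sub_apply, Pi.mul_apply, map_add, LinearMap.add_apply]
    ring
  obtain ⟨φ₀, hφ₀⟩ := exists_forall_mul_add_mul_eq_zero_imp hB
  let T : Dual K E →ₗ[K] W :=
    { toFun := fun ψ => ⟨⇑ψ * ⇑(B φ₀) + ⇑φ₀ * ⇑(B ψ), hpolar φ₀ ψ⟩
      map_add' := fun ψ ψ' => Subtype.ext <| funext fun X => by
        simp only [Submodule.coe_add, Pi.add_apply, Pi.mul_apply, map_add, LinearMap.add_apply]
        ring
      map_smul' := fun c ψ => Subtype.ext <| funext fun X => by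
        simp only [Submodule.coe_smul, Pi.smul_apply, Pi.add_apply, Pi.mul_apply, map_smul,
          LinearMap.smul_apply, smul_eq_mul, RingHom.id_apply]
        ring }
  have hT : Function.Injective T := by
    rw [← LinearMap.ker_eq_bot, LinearMap.ker_eq_bot']
    exact fun ψ hψ => hφ₀ ψ (congrArg Subtype.val hψ)
  calc finrank K E = finrank K (Dual K E) := Subspace.dual_finrank_eq.symm
    _ ≤ finrank K W := LinearMap.finrank_le_finrank_of_injective hT

end Module.Dual

theorem sesqForm_eq_zero_of_finrank_lt {n : ℕ} (H : (Fin n → ℂ) →ₗ[ℂ] (Fin n → ℂ) →ₗ⋆[ℂ] ℂ)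
    {W : Submodule ℂ ((Fin n → ℂ) → ℂ)} [FiniteDimensional ℂ W]
    (hW : ∀ Y, (fun X => stdHermitian n X Y * H X Y) ∈ W) (hdim : finrank ℂ W < n) :
    H = 0 := by
  let e : (Fin n → ℂ) ≃ₗ⋆[ℂ] Dual ℂ (Fin n → ℂ) :=
    (starLinearEquiv ℂ).trans (dotProductEquiv ℂ (Fin n))
  have he : ∀ X Y, e Y X = stdHermitian n X Y := fun X Y => by
    simp [e, stdHermitian, sesqFormOfConjSymm, dotProduct, mul_comm]
  -- For `φ = e Y`, `φ * B φ` is the form `X ↦ (X, Y) H(X, Y)`.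
  let B : End ℂ (Dual ℂ (Fin n → ℂ)) := H.flip ∘ₛₗ e.symm.toLinearMap
  have hB : ∀ Y, B (e Y) = H.flip Y := fun Y => by simp [B]
  by_contra hH
  refine (Dual.finrank_le_of_mul_apply_mem (B := B) (fun hB0 => hH ?_) fun φ => ?_).not_gt
    (by simpa using hdim)
  · refine LinearMap.ext fun X => LinearMap.ext fun Y => ?_
    simpa [hB0] using (LinearMap.congr_fun (hB Y) X).symm
  · obtain ⟨Y, rfl⟩ := e.surjective φ
    convert hW Y using 1
    ext X
    rw [Pi.mul_apply, hB, he, flip_apply]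

theorem sub_mem_span_range_sumElim {K α ι : Type*} [CommRing K] [Fintype ι] (f g : α → ι → K)
    (ℓ ℓ' : (ι → K) →ₗ[K] K) :
    (fun x => ℓ (f x) - ℓ' (g x)) ∈
      Submodule.span K (Set.range (Sum.elim (fun i x => f x i) fun i x => g x i)) := by
  classical
  refine (Submodule.mem_span_range_iff_exists_fun K).2
    ⟨Sum.elim (fun i => ℓ fun j => if i = j then 1 else 0)
      fun i => -ℓ' fun j => if i = j then 1 else 0, ?_⟩
  ext x
  simp [Fintype.sum_sum_type, pi_apply_eq_sum_univ ℓ (f x), pi_apply_eq_sum_univ ℓ' (g x), mul_comm,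
    sub_eq_add_neg]

theorem exists_linearIsometryEquiv_apply_eq_of_inner_eq {𝕜 V ι : Type*} [RCLike 𝕜]
    [NormedAddCommGroup V] [InnerProductSpace 𝕜 V] [FiniteDimensional 𝕜 V] (f g : ι → V)
    (h : ∀ i j, inner 𝕜 (f i) (f j) = inner 𝕜 (g i) (g j)) :
    ∃ U : V ≃ₗᵢ[𝕜] V, ∀ i, U (f i) = g i := by
  let Lf := Finsupp.linearCombination 𝕜 f
  let Lg := Finsupp.linearCombination 𝕜 g
  have hL : ∀ a b, inner 𝕜 (Lf a) (Lf b) = inner 𝕜 (Lg a) (Lg b) := fun a b => by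
    simp [Lf, Lg, Finsupp.linearCombination_apply, Finsupp.sum_inner, Finsupp.inner_sum,
      inner_smul_left, inner_smul_right, h]
  have hker : ker Lf ≤ ker Lg := fun a ha => by
    rw [mem_ker, ← inner_self_eq_zero (𝕜 := 𝕜), ← hL, mem_ker.mp ha, inner_zero_left]
  let φ : range Lf →ₗ[𝕜] V := (ker Lf).liftQ Lg hker ∘ₗ Lf.quotKerEquivRange.symm.toLinearMap
  have hφ : ∀ a, φ ⟨Lf a, mem_range_self Lf a⟩ = Lg a := fun a => by
    simp [φ]
  let L := φ.isometryOfInner <| by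
    rintro ⟨_, a, rfl⟩ ⟨_, b, rfl⟩
    rw [hφ, hφ, Submodule.coe_inner, hL]
  refine ⟨L.extend.toLinearIsometryEquiv rfl, fun i => ?_⟩
  calc L.extend (f i) = L.extend (⟨Lf (Finsupp.single i 1), mem_range_self Lf _⟩ : range Lf) := by
        simp [Lf]
    _ = g i := by rw [L.extend_apply]; simp [L, hφ, Lg]

theorem exists_isometry_apply_eq_of_sesqForm_eq {V ι : Type*} [AddCommGroup V] [Module ℂ V]
    [FiniteDimensional ℂ V] (B : V →ₗ[ℂ] V →ₗ⋆[ℂ] ℂ) (hconj : ∀ u v, B v u = conj (B u v))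
    (hpos : ∀ u, u ≠ 0 → 0 < (B u u).re) (f g : ι → V) (h : ∀ i j, B (f i) (f j) = B (g i) (g j)) :
    ∃ U : V →ₗ[ℂ] V,
      Function.Bijective U ∧ (∀ u v, B (U u) (U v) = B u v) ∧ ∀ i, U (f i) = g i := by
  have hdef : ∀ u, B u u = 0 → u = 0 := fun u hu => by
    by_contra hu0
    simpa [hu] using hpos u hu0
  let core : InnerProductSpace.Core ℂ V :=
    { inner := fun u v => B v u
      conj_inner_symm := fun u v => (hconj u v).symm
      re_inner_nonneg := fun u => by
        rcases eq_or_ne u 0 with rfl | hu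
        · simp
        · exact (hpos u hu).le
      add_left := fun u u' v => map_add (B v) u u'
      smul_left := fun u v c => map_smulₛₗ (B v) c u
      definite := hdef }
  let _ : NormedAddCommGroup V := core.toNormedAddCommGroup
  let _ : InnerProductSpace ℂ V := InnerProductSpace.ofCore core.toCore
  obtain ⟨U, hU⟩ := exists_linearIsometryEquiv_apply_eq_of_inner_eq f g fun i j => h j i
  exact ⟨U.toLinearEquiv.toLinearMap, U.bijective, fun u v => U.inner_map_map v u, hU⟩

theorem LinearMap.eq_of_forall_apply_self_eq_of_symm {K E F : Type*} [Field K] [NeZero (2 : K)]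
    [AddCommGroup E] [Module K E] [AddCommGroup F] [Module K F] {P Q : E →ₗ[K] E →ₗ[K] F}
    (hP : ∀ X Y, P X Y = P Y X) (hQ : ∀ X Y, Q X Y = Q Y X) (h : ∀ X, P X X = Q X X) : P = Q := by
  ext X Y
  have hXY := h (X + Y)
  simp only [map_add, add_apply, h X, h Y, hP Y X, hQ Y X] at hXY
  have : (2 : K) • P X Y = (2 : K) • Q X Y := by
    rw [two_smul, two_smul]
    linear_combination (norm := module) hXY
  exact smul_right_injective F two_ne_zero this

theorem stmt_9_general (n m : ℕ) (hmn : 2 * m < n)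
    (P Pt : (Fin n → ℂ) → (Fin n → ℂ) → (Fin m → ℂ))
    (Psymm : ∀ X Y, P X Y = P Y X)
    (Padd : ∀ X X' Y, P (X + X') Y = P X Y + P X' Y)
    (Psmul : ∀ (c : ℂ) X Y, P (c • X) Y = c • P X Y)
    (Ptsymm : ∀ X Y, Pt X Y = Pt Y X)
    (Ptadd : ∀ X X' Y, Pt (X + X') Y = Pt X Y + Pt X' Y)
    (Ptsmul : ∀ (c : ℂ) X Y, Pt (c • X) Y = c • Pt X Y)
    (ipm : (Fin m → ℂ) → (Fin m → ℂ) → ℂ)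
    (ipm_add : ∀ u u' v, ipm (u + u') v = ipm u v + ipm u' v)
    (ipm_smul : ∀ (c : ℂ) u v, ipm (c • u) v = c * ipm u v)
    (ipm_conj : ∀ u v, ipm v u = starRingEnd ℂ (ipm u v))
    (ipm_pos : ∀ u, u ≠ 0 → 0 < (ipm u u).re)
    (H : (Fin n → ℂ) → (Fin n → ℂ) → ℂ)
    (H_add : ∀ u u' v, H (u + u') v = H u v + H u' v)
    (H_smul : ∀ (c : ℂ) u v, H (c • u) v = c * H u v)
    (H_conj : ∀ u v, H v u = starRingEnd ℂ (H u v))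
    (heq : ∀ X, ipm (P X X) (P X X) - ipm (Pt X X) (Pt X X)
      = (∑ i, X i * starRingEnd ℂ (X i)) * H X X) :
    (∀ X Y, H X Y = 0) ∧
    ∃ U : (Fin m → ℂ) →ₗ[ℂ] (Fin m → ℂ), Function.Bijective U ∧
      (∀ u v, ipm (U u) (U v) = ipm u v) ∧
      ∀ X Y, Pt X Y = U (P X Y) := by
  let B := sesqFormOfConjSymm ipm ipm_add ipm_smul ipm_conj
  let Hb := sesqFormOfConjSymm H H_add H_smul H_conj
  let Pb := bilinOfSymm P Psymm Padd Psmul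
  let Ptb := bilinOfSymm Pt Ptsymm Ptadd Ptsmul
  have hpol : ∀ X Y, ipm (P X X) (P Y Y) - ipm (Pt X X) (Pt Y Y) = stdHermitian n X Y * Hb X Y :=
    quartic_identity_of_diag B (P := Pb) (Pt := Ptb) Psymm Ptsymm (stdHermitian n) Hb heq
  let W := Submodule.span ℂ (Set.range (Sum.elim (fun a X => P X X a) fun a X => Pt X X a))
  have : FiniteDimensional ℂ W := FiniteDimensional.span_of_finite ℂ (Set.finite_range _)
  have hH : Hb = 0 := sesqForm_eq_zero_of_finrank_lt Hb (W := W) (fun Y => by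
      convert sub_mem_span_range_sumElim (fun X => P X X) (fun X => Pt X X) (B.flip (P Y Y))
        (B.flip (Pt Y Y)) using 1
      exact funext fun X => (hpol X Y).symm)
    ((finrank_range_le_card _).trans_lt (by simpa [two_mul] using hmn))
  have hgram : ∀ X Y, ipm (P X X) (P Y Y) = ipm (Pt X X) (Pt Y Y) := fun X Y =>
    sub_eq_zero.mp <| (hpol X Y).trans <| by
      rw [hH, LinearMap.zero_apply, LinearMap.zero_apply, mul_zero]
  obtain ⟨U, hUbij, hU, hUP⟩ := exists_isometry_apply_eq_of_sesqForm_eq B ipm_conj ipm_pos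
    (fun X => P X X) (fun X => Pt X X) hgram
  have hPt : Ptb = Pb.compr₂ U := eq_of_forall_apply_self_eq_of_symm Ptsymm
    (fun X Y => by simp [Pb, bilinOfSymm, Psymm X Y]) fun X => (hUP X).symm
  exact ⟨fun X Y => congr_fun₂ hH X Y, U, hUbij, hU, fun X Y => congr_fun₂ hPt X Y⟩

/-- Lemma 4.1(ii), full statement: if 2m < n and the quartic forms of Π and Π̃
    differ by (X,X)·H(X,X), then H ≡ 0 and Π̃ = U ∘ Π for a unitary U of ℂᵐ. -/
theorem stmt_9 (n m : ℕ) (hn : 0 < n) (hm : 0 < m) (hmn : 2 * m < n)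
    (P Pt : (Fin n → ℂ) → (Fin n → ℂ) → (Fin m → ℂ))
    (Psymm : ∀ X Y, P X Y = P Y X)
    (Padd : ∀ X X' Y, P (X + X') Y = P X Y + P X' Y)
    (Psmul : ∀ (c : ℂ) X Y, P (c • X) Y = c • P X Y)
    (Ptsymm : ∀ X Y, Pt X Y = Pt Y X)
    (Ptadd : ∀ X X' Y, Pt (X + X') Y = Pt X Y + Pt X' Y)
    (Ptsmul : ∀ (c : ℂ) X Y, Pt (c • X) Y = c • Pt X Y)
    (ipm : (Fin m → ℂ) → (Fin m → ℂ) → ℂ)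
    (ipm_add : ∀ u u' v, ipm (u + u') v = ipm u v + ipm u' v)
    (ipm_smul : ∀ (c : ℂ) u v, ipm (c • u) v = c * ipm u v)
    (ipm_conj : ∀ u v, ipm v u = starRingEnd ℂ (ipm u v))
    (ipm_pos : ∀ u, u ≠ 0 → 0 < (ipm u u).re)
    (H : (Fin n → ℂ) → (Fin n → ℂ) → ℂ)
    (H_add : ∀ u u' v, H (u + u') v = H u v + H u' v)
    (H_smul : ∀ (c : ℂ) u v, H (c • u) v = c * H u v)
    (H_conj : ∀ u v, H v u = starRingEnd ℂ (H u v))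
    (heq : ∀ X, ipm (P X X) (P X X) - ipm (Pt X X) (Pt X X)
      = (∑ i, X i * starRingEnd ℂ (X i)) * H X X) :
    (∀ X Y, H X Y = 0) ∧
    ∃ U : (Fin m → ℂ) →ₗ[ℂ] (Fin m → ℂ), Function.Bijective U ∧
      (∀ u v, ipm (U u) (U v) = ipm u v) ∧
      ∀ X Y, Pt X Y = U (P X Y) :=
  stmt_9_general n m hmn P Pt Psymm Padd Psmul Ptsymm Ptadd Ptsmul ipm ipm_add ipm_smul ipm_conj
    ipm_pos H H_add H_smul H_conj heq
end
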